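/- arXiv:2506.04537 — 2 statements merged into one kernel-verified Lean document; each statement's English description precedes it below -/
import Mathlib

section
/- Let a, b ∈ ℝ and let (m_n)_{n≥0} be a sequence of real numbers such that for every n ≥ 0: ∑_{k=0}^{n} (−1)ᵏ C(n,k) m_{n−k} aᵏ = 0 if n is odd, and = b^{n/2} (n−1)!! if n is even (with (−1)!! = 1, so in particular m₀ = 1). Then for every z ∈ ℂ the series ∑_{n≥0} m_n zⁿ/n! converges absolutely and its sum equals exp(a·z + b·z²/2). -/
open Complex Finset

open scoped Nat

/-!
The recurrence says that, as formal power series, `e^{-aX} M = G`, where `M` and `G` are the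
exponential generating functions of `(m n)` and of the centered Gaussian moments
`b^(n/2) (n-1)‼`; hence `M = e^{aX} G`. Since `(2t-1)‼ / (2t)! = 1 / (2^t t!)`, the series
`G(z)` is the exponential series of `b z² / 2` spread over the even indices, so both factors
converge absolutely and the Cauchy product gives `exp (a z) * exp (b z² / 2)`.
-/

section BinomialInversion

variable {K : Type*} [Field K] [CharZero K]

namespace PowerSeries

theorem coeff_rescale_exp_mul_mk (x : K) (f : ℕ → K) (n : ℕ) :
    coeff n (rescale x (exp K) * mk fun k => f k / k !) =
      (∑ k ∈ range (n + 1), (n.choose k : K) * x ^ k * f (n - k)) / n ! := by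
  rw [coeff_mul, Nat.sum_antidiagonal_eq_sum_range_succ_mk, sum_div]
  refine sum_congr rfl fun k hk => ?_
  have hkn : k ≤ n := Nat.lt_succ_iff.mp (mem_range.mp hk)
  simp only [coeff_rescale, coeff_exp, coeff_mk, map_div₀, map_one, map_natCast,
    Nat.cast_choose K hkn]
  have : (n ! : K) ≠ 0 := Nat.cast_ne_zero.mpr n.factorial_ne_zero
  field_simp

theorem mk_eq_rescale_exp_mul_of_sum_choose (x : K) {f g : ℕ → K}
    (h : ∀ n, ∑ k ∈ range (n + 1), (-1) ^ k * (n.choose k : K) * f (n - k) * x ^ k = g n) :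
    (mk fun n => f n / n !) = rescale x (exp K) * mk fun n => g n / n ! := by
  have hneg : rescale (-x) (exp K) * (mk fun n => f n / n !) = mk fun n => g n / n ! := by
    ext n
    rw [coeff_rescale_exp_mul_mk, coeff_mk, ← h n]
    congr 1
    refine sum_congr rfl fun k _ => ?_
    rw [neg_pow]
    ring
  rw [← hneg, ← mul_assoc, exp_mul_exp_eq_exp_add, add_neg_cancel, rescale_zero]
  simp

end PowerSeries

theorem div_factorial_eq_sum_antidiagonal_of_sum_choose (x : K) {f g : ℕ → K}
    (h : ∀ n, ∑ k ∈ range (n + 1), (-1) ^ k * (n.choose k : K) * f (n - k) * x ^ k = g n)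
    (n : ℕ) :
    f n / n ! = ∑ p ∈ antidiagonal n, x ^ p.1 / p.1 ! * (g p.2 / p.2 !) := by
  have := congrArg (PowerSeries.coeff n) (PowerSeries.mk_eq_rescale_exp_mul_of_sum_choose x h)
  rw [PowerSeries.coeff_mul, PowerSeries.coeff_mk] at this
  rw [this]
  refine sum_congr rfl fun p _ => ?_
  simp [PowerSeries.coeff_rescale, PowerSeries.coeff_exp, div_eq_mul_inv]

end BinomialInversion

theorem Nat.factorial_two_mul (t : ℕ) : (2 * t)! = 2 ^ t * t ! * (2 * t - 1)‼ := by
  cases t with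
  | zero => rfl
  | succ t =>
    rw [show 2 * (t + 1) = (2 * t + 1) + 1 by ring, Nat.factorial_eq_mul_doubleFactorial,
      show 2 * t + 1 + 1 = 2 * (t + 1) by ring, Nat.doubleFactorial_two_mul]
    rfl

def centeredGaussianMoment (b : ℝ) (n : ℕ) : ℝ :=
  if Even n then b ^ (n / 2) * (n - 1)‼ else 0

theorem centeredGaussianMoment_mul_pow_div_factorial (b : ℝ) (z : ℂ) (j : ℕ) :
    (centeredGaussianMoment b j : ℂ) * z ^ j / j ! =
      Function.extend (fun k => 2 * k) (fun k => (b * z ^ 2 / 2) ^ k / k !) 0 j := by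
  obtain ⟨t, rfl | rfl⟩ := Nat.even_or_odd' j
  · rw [(mul_right_injective₀ two_ne_zero).extend_apply, centeredGaussianMoment,
      if_pos (even_two_mul t), Nat.mul_div_cancel_left t two_pos, Nat.factorial_two_mul]
    have : (t ! : ℂ) ≠ 0 := Nat.cast_ne_zero.mpr t.factorial_ne_zero
    have : ((2 * t - 1)‼ : ℂ) ≠ 0 := Nat.cast_ne_zero.mpr (Nat.doubleFactorial_pos _).ne'
    push_cast
    rw [div_pow, mul_pow, ← pow_mul]
    field_simp
  · rw [Function.extend_apply' _ _ _ fun ⟨k, hk⟩ => by omega, centeredGaussianMoment,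
      if_neg (Nat.not_even_two_mul_add_one t)]
    simp

theorem hasSum_centeredGaussianMoment_mul_pow_div_factorial (b : ℝ) (z : ℂ) :
    HasSum (fun j => (centeredGaussianMoment b j : ℂ) * z ^ j / j !) (cexp (b * z ^ 2 / 2)) := by
  simp only [centeredGaussianMoment_mul_pow_div_factorial]
  rw [hasSum_extend_zero (mul_right_injective₀ two_ne_zero), exp_eq_exp_ℂ]
  exact NormedSpace.expSeries_div_hasSum_exp _

theorem summable_norm_centeredGaussianMoment_mul_pow_div_factorial (b : ℝ) (z : ℂ) :
    Summable fun j => ‖(centeredGaussianMoment b j : ℂ) * z ^ j / (j ! : ℂ)‖ := by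
  simp only [centeredGaussianMoment_mul_pow_div_factorial, Function.apply_extend norm]
  have : (norm ∘ (0 : ℕ → ℂ)) = 0 := funext fun _ => norm_zero
  rw [this, summable_extend_zero (mul_right_injective₀ two_ne_zero)]
  exact NormedSpace.norm_expSeries_div_summable _

theorem moment_mul_pow_div_factorial_eq_sum_antidiagonal (a b : ℝ) {m : ℕ → ℝ}
    (hrec : ∀ n, ∑ k ∈ range (n + 1), (-1 : ℝ) ^ k * (n.choose k : ℝ) * m (n - k) * a ^ k =
      centeredGaussianMoment b n) (z : ℂ) (n : ℕ) :
    (m n : ℂ) * z ^ n / n ! = ∑ p ∈ antidiagonal n,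
      (a * z) ^ p.1 / p.1 ! * ((centeredGaussianMoment b p.2 : ℂ) * z ^ p.2 / p.2 !) := by
  have h := congrArg (fun r : ℝ => (r : ℂ) * z ^ n)
    (div_factorial_eq_sum_antidiagonal_of_sum_choose a hrec n)
  push_cast at h
  rw [mul_div_right_comm, h, sum_mul]
  refine sum_congr rfl fun p hp => ?_
  rw [← mem_antidiagonal.mp hp, pow_add]
  ring

/-- If a sequence `(m n)` of real numbers satisfies the centered Gaussian moment
recurrence `∑_{k=0}^{n} (−1)ᵏ C(n,k) m_{n−k} aᵏ = 0` for odd `n` and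
`= b^(n/2) (n−1)!!` for even `n`, then for every `z ∈ ℂ` the series
`∑ m_n zⁿ/n!` converges absolutely to `exp(a z + b z²/2)`. -/
theorem moment_generating_function_gaussian (a b : ℝ) (m : ℕ → ℝ)
    (hrec : ∀ n : ℕ,
      ∑ k ∈ Finset.range (n + 1),
          (-1 : ℝ) ^ k * (n.choose k : ℝ) * m (n - k) * a ^ k =
        if Even n then b ^ (n / 2) * (Nat.doubleFactorial (n - 1) : ℝ) else 0) :
    ∀ z : ℂ,
      Summable (fun n : ℕ => ‖(m n : ℂ) * z ^ n / (Nat.factorial n : ℂ)‖) ∧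
      ∑' n : ℕ, (m n : ℂ) * z ^ n / (Nat.factorial n : ℂ) =
        Complex.exp ((a : ℂ) * z + (b : ℂ) * z ^ 2 / 2) := by
  intro z
  have hexp := NormedSpace.norm_expSeries_div_summable ((a : ℂ) * z)
  have hgauss := summable_norm_centeredGaussianMoment_mul_pow_div_factorial b z
  simp only [moment_mul_pow_div_factorial_eq_sum_antidiagonal a b hrec z]
  refine ⟨(summable_norm_sum_mul_antidiagonal_of_summable_norm hexp hgauss :), ?_⟩
  rw [← (tsum_mul_tsum_eq_tsum_sum_antidiagonal_of_summable_norm hexp hgauss :),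
    (hasSum_centeredGaussianMoment_mul_pow_div_factorial b z).tsum_eq,
    (NormedSpace.expSeries_div_hasSum_exp _).tsum_eq, ← exp_eq_exp_ℂ, exp_add]
end

section
/- Let H be a complex Hilbert space with complex inner product ⟪·,·⟫ (conjugate-linear in the first argument) and real inner product (z,u) := Re⟪z,u⟫. Let S be a bounded ℝ-linear operator on H, symmetric for (·,·) (i.e. (Sz,u) = (z,Su) for all z,u), such that (z,Sz)·(u,Su) ≥ (z,Su)² + (Im⟪z,u⟫)² for all z,u ∈ H. Then ‖z‖ ≤ ‖S‖·‖Sz‖ for every z ∈ H; consequently S is injective with closed range, S is bijective, and its inverse is a bounded ℝ-linear operator with ‖S⁻¹‖ ≤ ‖S‖. -/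
/-!
Testing Heisenberg's inequality on the pair `(z, i z)`, for which `Im⟪z, i z⟫ = ‖z‖²`, gives
`‖z‖⁴ ≤ (z, Sz)(iz, S iz) ≤ ‖z‖‖Sz‖ · ‖S‖‖z‖²`, i.e. `‖z‖ ≤ ‖S‖‖Sz‖`. So `S` is bounded below,
hence injective with closed range, and the same estimate bounds the inverse by `‖S‖`. If `u` is
orthogonal to the range for `(·,·)`, then `(u, Su) = 0` and the same test gives `‖u‖⁴ ≤ 0`; so the
closed range is also dense, so `S` is onto.
-/

open Complex

local notation "⟪" x ", " y "⟫" => @inner ℂ _ _ x y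

namespace CovarianceOperator

def SatisfiesUncertainty {H : Type*} [NormedAddCommGroup H] [InnerProductSpace ℂ H]
    (S : H → H) : Prop :=
  ∀ z u : H, (⟪z, S u⟫).re ^ 2 + (⟪z, u⟫).im ^ 2 ≤ (⟪z, S z⟫).re * (⟪u, S u⟫).re

section

variable {H : Type*} [NormedAddCommGroup H] [InnerProductSpace ℂ H]

theorem im_inner_I_smul_self (z : H) : (⟪z, I • z⟫).im = ‖z‖ ^ 2 := by
  rw [inner_smul_right, inner_self_eq_norm_sq_to_K]
  simp [← ofReal_pow]

theorem abs_re_inner_apply_self_le (S : H →L[ℝ] H) (z : H) :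
    |(⟪z, S z⟫).re| ≤ ‖S‖ * ‖z‖ ^ 2 :=
  calc |(⟪z, S z⟫).re| ≤ ‖z‖ * ‖S z‖ := (abs_re_le_norm _).trans (norm_inner_le_norm _ _)
    _ ≤ ‖z‖ * (‖S‖ * ‖z‖) := by gcongr; exact S.le_opNorm z
    _ = ‖S‖ * ‖z‖ ^ 2 := by ring

namespace SatisfiesUncertainty

theorem norm_pow_four_le {S : H → H} (hS : SatisfiesUncertainty S) (z : H) :
    ‖z‖ ^ 4 ≤ (⟪z, S z⟫).re * (⟪I • z, S (I • z)⟫).re := by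
  have h := hS z (I • z)
  rw [im_inner_I_smul_self] at h
  nlinarith [sq_nonneg (⟪z, S (I • z)⟫).re]

theorem norm_le_opNorm_mul_norm_apply {S : H →L[ℝ] H} (hS : SatisfiesUncertainty S) (z : H) :
    ‖z‖ ≤ ‖S‖ * ‖S z‖ := by
  rcases (norm_nonneg z).eq_or_lt with hz | hz
  · rw [← hz]; positivity
  have hIz : ‖I • z‖ = ‖z‖ := by simp [norm_smul]
  have h : ‖z‖ * ‖z‖ ^ 3 ≤ (‖S‖ * ‖S z‖) * ‖z‖ ^ 3 :=
    calc ‖z‖ * ‖z‖ ^ 3 = ‖z‖ ^ 4 := by ring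
      _ ≤ |(⟪z, S z⟫).re| * |(⟪I • z, S (I • z)⟫).re| :=
          (hS.norm_pow_four_le z).trans ((le_abs_self _).trans_eq (abs_mul _ _))
      _ ≤ (‖z‖ * ‖S z‖) * (‖S‖ * ‖z‖ ^ 2) := by
          gcongr
          · exact (abs_re_le_norm _).trans (norm_inner_le_norm _ _)
          · simpa [hIz] using abs_re_inner_apply_self_le S (I • z)
      _ = (‖S‖ * ‖S z‖) * ‖z‖ ^ 3 := by ring
  exact le_of_mul_le_mul_right h (by positivity)

theorem eq_zero_of_forall_re_inner_apply_eq_zero {S : H → H} (hS : SatisfiesUncertainty S)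
    {u : H} (hu : ∀ z, (⟪S z, u⟫).re = 0) : u = 0 := by
  have h := hS.norm_pow_four_le u
  rw [← inner_conj_symm, conj_re, hu, zero_mul] at h
  exact norm_eq_zero.mp (pow_eq_zero_iff four_ne_zero |>.mp (le_antisymm h (by positivity)))

end SatisfiesUncertainty

end

theorem surjective_of_isClosed_range_of_inner_apply_eq_zero {E : Type*} [NormedAddCommGroup E]
    [InnerProductSpace ℝ E] [CompleteSpace E] {f : E →L[ℝ] E} (hclosed : IsClosed (Set.range f))
    (hperp : ∀ u, (∀ z, inner ℝ (f z) u = 0) → u = 0) : Function.Surjective f := by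
  have hrange : LinearMap.range (f : E →ₗ[ℝ] E) = ⊤ := by
    rw [← hclosed.submodule_topologicalClosure_eq (s := LinearMap.range (f : E →ₗ[ℝ] E)),
      Submodule.topologicalClosure_eq_top_iff, Submodule.eq_bot_iff]
    rintro u hu
    exact hperp u fun z => hu (f z) ⟨z, rfl⟩
  exact LinearMap.range_eq_top.mp hrange

end CovarianceOperator

open CovarianceOperator

theorem covariance_operator_invertible_general {H : Type*} [NormedAddCommGroup H]
    [InnerProductSpace ℂ H] [CompleteSpace H] (S : H →L[ℝ] H)
    (hineq : ∀ z u : H,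
      (⟪z, S u⟫).re ^ 2 + (⟪z, u⟫).im ^ 2 ≤ (⟪z, S z⟫).re * (⟪u, S u⟫).re) :
    (∀ z : H, ‖z‖ ≤ ‖S‖ * ‖S z‖) ∧
    Function.Injective S ∧
    IsClosed (Set.range S) ∧
    Function.Bijective S ∧
    ∃ T : H →L[ℝ] H, (∀ z : H, T (S z) = z ∧ S (T z) = z) ∧ ‖T‖ ≤ ‖S‖ := by
  have hS : SatisfiesUncertainty S := hineq
  have hbound := hS.norm_le_opNorm_mul_norm_apply
  have hanti : AntilipschitzWith ‖S‖₊ S := S.antilipschitz_of_bound hbound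
  have hinj := hanti.injective
  have hclosed := hanti.isClosed_range S.uniformContinuous
  let _ := InnerProductSpace.complexToReal (G := H)
  have hsurj : Function.Surjective S :=
    surjective_of_isClosed_range_of_inner_apply_eq_zero hclosed fun u hu =>
      hS.eq_zero_of_forall_re_inner_apply_eq_zero fun z =>
        (real_inner_eq_re_inner ℂ _ _).symm.trans (hu z)
  let e := ContinuousLinearEquiv.ofBijective S (LinearMap.ker_eq_bot.mpr hinj)
    (LinearMap.range_eq_top.mpr hsurj)
  have hST : ∀ z, S (e.symm z) = z := e.apply_symm_apply
  refine ⟨hbound, hinj, hclosed, ⟨hinj, hsurj⟩, e.symm,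
    fun z => ⟨e.symm_apply_apply z, hST z⟩, ?_⟩
  refine ContinuousLinearMap.opNorm_le_bound _ (norm_nonneg S) fun z => ?_
  simpa only [ContinuousLinearEquiv.coe_coe, hST] using hbound (e.symm z)

/-- If `S` is a bounded ℝ-linear symmetric operator on a complex Hilbert space
with `(z,Sz)(u,Su) ≥ (z,Su)² + (Im⟪z,u⟫)²` for all `z,u` (where
`(z,u) = Re⟪z,u⟫`), then `‖z‖ ≤ ‖S‖·‖Sz‖` for all `z`; consequently `S` is
injective with closed range, bijective, and has a bounded ℝ-linear inverse `T`
with `‖T‖ ≤ ‖S‖`. -/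
theorem covariance_operator_invertible {H : Type*} [NormedAddCommGroup H]
    [InnerProductSpace ℂ H] [CompleteSpace H] (S : H →L[ℝ] H)
    (hsymm : ∀ z u : H, (⟪S z, u⟫).re = (⟪z, S u⟫).re)
    (hineq : ∀ z u : H,
      (⟪z, S u⟫).re ^ 2 + (⟪z, u⟫).im ^ 2 ≤ (⟪z, S z⟫).re * (⟪u, S u⟫).re) :
    (∀ z : H, ‖z‖ ≤ ‖S‖ * ‖S z‖) ∧
    Function.Injective S ∧
    IsClosed (Set.range S) ∧
    Function.Bijective S ∧
    ∃ T : H →L[ℝ] H, (∀ z : H, T (S z) = z ∧ S (T z) = z) ∧ ‖T‖ ≤ ‖S‖ :=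
  covariance_operator_invertible_general S hineq
end
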